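/- Let Z be a supersolvable Zinbiel algebra. Then every maximal (proper) subalgebra of Z has codimension one in Z. -/

import Mathlib

variable {F : Type*} [Field F] {Z : Type*} [AddCommGroup Z] [Module F Z]

/-- `A` is a subalgebra of the algebra with multiplication `b`. -/
def IsSubalg (b : Z →ₗ[F] Z →ₗ[F] Z) (A : Submodule F Z) : Prop :=
  ∀ x ∈ A, ∀ y ∈ A, b x y ∈ A

/-- `A` is a two-sided ideal. -/
def IsIdeal (b : Z →ₗ[F] Z →ₗ[F] Z) (A : Submodule F Z) : Prop :=
  ∀ z : Z, ∀ x ∈ A, b z x ∈ A ∧ b x z ∈ A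

/-- in a supersolvable Zinbiel algebra (i.e. one having a chain of ideals
`0 = Z₀ ⊂ Z₁ ⊂ ... ⊂ Z_n = Z` with `dim Z_i = i`), every maximal proper subalgebra has
codimension one. -/
theorem stmt4 [FiniteDimensional F Z] (b : Z →ₗ[F] Z →ₗ[F] Z)
    (hZinbiel : ∀ x y z : Z, b (b x y) z = b x (b y z) + b x (b z y))
    (C : ℕ → Submodule F Z) (hC0 : C 0 = ⊥) (hCtop : C (Module.finrank F Z) = ⊤)
    (hmono : ∀ i, i < Module.finrank F Z → C i < C (i + 1))
    (hdim : ∀ i ≤ Module.finrank F Z, Module.finrank F (C i) = i)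
    (hideal : ∀ i ≤ Module.finrank F Z, IsIdeal b (C i))
    (M : Submodule F Z) (hM : IsSubalg b M) (hMprop : M ≠ ⊤)
    (hmax : ∀ N : Submodule F Z, IsSubalg b N → M < N → N = ⊤) :
    Module.finrank F M + 1 = Module.finrank F Z := by
  classical
  set n := Module.finrank F Z with hn
  have hex : ∃ i, i ≤ n ∧ ¬ C i ≤ M :=
    ⟨n, le_refl n, by rw [hCtop]; intro h; exact hMprop (top_le_iff.mp h)⟩
  set i := Nat.find hex with hidef
  obtain ⟨hin, hiM⟩ := Nat.find_spec hex
  rw [← hidef] at hin hiM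
  have hi0 : i ≠ 0 := by
    intro h
    apply hiM
    rw [show i = 0 from h, hC0]
    exact bot_le
  obtain ⟨j, hj⟩ := Nat.exists_eq_succ_of_ne_zero hi0
  have hjn : j < n := by omega
  have hjM : C j ≤ M := by
    by_contra hc
    exact Nat.find_min hex (by omega : j < i) ⟨by omega, hc⟩
  -- M ⊔ C i is a subalgebra
  have hsub : IsSubalg b (M ⊔ C i) := by
    intro x hx y hy
    obtain ⟨m, hm, c, hc, rfl⟩ := Submodule.mem_sup.mp hx
    obtain ⟨m', hm', c', hc', rfl⟩ := Submodule.mem_sup.mp hy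
    have hid := hideal i hin
    have h1 : b m m' ∈ M := hM m hm m' hm'
    have h2 : b m c' ∈ C i := (hid m c' hc').1
    have h3 : b c (m' + c') ∈ C i := (hid (m' + c') c hc).2
    have heq : b (m + c) (m' + c') = b m m' + (b m c' + b c (m' + c')) := by
      simp only [map_add, LinearMap.add_apply]
      abel
    rw [heq]
    exact Submodule.add_mem _ (Submodule.mem_sup_left h1)
      (Submodule.mem_sup_right (Submodule.add_mem _ h2 h3))
  have htop : M ⊔ C i = ⊤ := hmax _ hsub (left_lt_sup.mpr hiM)
  obtain ⟨x, hxC, hxM⟩ := SetLike.not_le_iff_exists.mp hiM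
  have hxj : x ∉ C j := fun h => hxM (hjM h)
  have hx0 : x ≠ 0 := fun h => hxM (h ▸ M.zero_mem)
  set W : Submodule F Z := C j ⊔ Submodule.span F {x} with hW
  have hWle : W ≤ C i := by
    apply sup_le
    · rw [hj]; exact (hmono j hjn).le
    · rw [Submodule.span_le, Set.singleton_subset_iff]; exact hxC
  have hxW : x ∈ W := Submodule.mem_sup_right (Submodule.mem_span_singleton_self x)
  have hjW : C j < W := lt_of_le_of_ne le_sup_left (fun h => hxj (h ▸ hxW))
  have hWrank : i ≤ Module.finrank F W := by
    have := Submodule.finrank_lt_finrank_of_lt hjW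
    rw [hdim j (by omega)] at this
    omega
  have hWeq : W = C i := by
    apply Submodule.eq_of_le_of_finrank_le hWle
    rw [hdim i hin]
    exact hWrank
  have htop2 : M ⊔ Submodule.span F {x} = ⊤ := by
    rw [← htop, ← hWeq, hW, ← sup_assoc, sup_eq_left.mpr hjM]
  have hle : n ≤ Module.finrank F M + 1 := by
    have h1 : Module.finrank F (M ⊔ Submodule.span F {x} : Submodule F Z) ≤
        Module.finrank F M + Module.finrank F (Submodule.span F {x}) := by
      have := Submodule.finrank_sup_add_finrank_inf_eq M (Submodule.span F {x})
      omega
    rw [htop2, finrank_top] at h1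
    rw [finrank_span_singleton hx0] at h1
    exact h1
  have hlt : Module.finrank F M < n := Submodule.finrank_lt hMprop
  omega
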